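/- arXiv:math/0611453 — 2 statements merged into one kernel-verified Lean document; each statement's English description precedes it below -/
import Mathlib

section
/- Let Γ be a group acting on a set Z, G₁ and G₂ subgroups of Γ, and J a subgroup of G₁ ∩ G₂. Suppose (X₁, X₂) is an interactive pair for (G₁, G₂, J). Suppose moreover that for each m ∈ {1,2} there is a subset D_m ⊆ Z such that: (i) for every x ∈ D_m and every g ∈ G_m with g ≠ 1, g • x ∉ D_m; and (ii) g • (D_m ∩ X_{3−m}) ⊆ X_{3−m} for every g ∈ G_m. Set D = (D₁ ∩ X₂) ∪ (D₂ ∩ X₁). Then D is precisely invariant under the trivial subgroup in the subgroup ⟨G₁, G₂⟩ generated by G₁ and G₂, i.e. γ • D ∩ D = ∅ for every γ ∈ ⟨G₁, G₂⟩ with γ ≠ 1. Furthermore, if D is nonempty, then the canonical homomorphism Φ : G₁ *_J G₂ → Γ is injective. -/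
open Pointwise

/-- `x` is a letter of factor `m`: it belongs to `G m` but not to `J`. -/
def NFLetter {Γ : Type*} [Group Γ] (G : Bool → Subgroup Γ) (J : Subgroup Γ)
    (m : Bool) (x : Γ) : Prop :=
  x ∈ G m ∧ x ∉ J

/-- `(X true, X false)` is an interactive pair for `(G true, G false, J)`. -/
def IsInteractivePair {Γ : Type*} [Group Γ] {Z : Type*} [MulAction Γ Z]
    (G : Bool → Subgroup Γ) (J : Subgroup Γ) (X : Bool → Set Z) : Prop :=
  (∀ m, (X m).Nonempty) ∧ Disjoint (X true) (X false) ∧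
    (∀ m, ∀ j ∈ J, j • X m = X m) ∧
    (∀ m, ∀ g : Γ, NFLetter G J m g → g • X m ⊆ X (!m))

/-- The canonical homomorphism from the amalgamated free product `G₁ *_J G₂` to `Γ`
induced by the inclusion homomorphisms of `G₁` and `G₂` into `Γ`. -/
noncomputable def amalgHom {Γ : Type*} [Group Γ] (G : Bool → Subgroup Γ) (J : Subgroup Γ)
    (hJ : ∀ m, J ≤ G m) :
    Monoid.PushoutI (fun m => Subgroup.inclusion (hJ m)) →* Γ :=
  Monoid.PushoutI.lift (fun m => (G m).subtype) J.subtype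
    (fun m => by ext x; rfl)

/-!
Ping-pong. Let `x ∈ D m ∩ X (!m)`. Every letter `a ∈ G t \ J` sends `x` into `X (!t)` (by the
second hypothesis if `t = m`, by the interactive pair otherwise), and the interactive pair then
bounces the image between `X true` and `X false`, so a reduced word whose first letter lies in
`G t` sends `x` into `X (!t)`. If that image were again in `D ∩ X`, it would lie in `D t`, and
applying the inverse of the first letter would land in `X (!t)` once more; this contradicts the
ping-pong for the rest of the word, or, for a one-letter word, the fact that `D t` is a
fundamental set for `G t`. Elements of `J` are handled directly by the two hypotheses on `D`.
Via the normal form of the amalgamated product, every nontrivial element of `G₁ *_J G₂`, and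
hence every nontrivial element of `⟨G₁, G₂⟩`, moves `D` off itself; if `D ≠ ∅` this forces
injectivity of `Φ`.
-/

namespace Monoid.PushoutI

theorem exists_reduced_eq_base_mul {ι : Type*} {K : ι → Type*}
    [∀ i, Group (K i)] {H : Type*} [Group H] {φ : ∀ i, H →* K i}
    (hφ : ∀ i, Function.Injective (φ i)) (w : PushoutI φ) :
    ∃ (h : H) (u : CoprodI.Word K), Reduced φ u ∧ w = base φ h * ofCoprodI u.prod := by
  classical
  obtain ⟨d⟩ := NormalWord.transversal_nonempty φ hφ
  set nw := NormalWord.equiv (d := d) w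
  refine ⟨nw.head, nw.toWord, ?_, (NormalWord.equiv.symm_apply_apply w).symm⟩
  rintro ⟨i, g⟩ hl hg
  -- `g` lies in both `(φ i).range` and the transversal `d.set i`, which meet only in `1`
  have hself :=
    (d.compl i).equiv_snd_eq_self_of_mem_of_one_mem (one_mem _) (nw.normalized i g hl)
  have hone := (d.compl i).equiv_snd_eq_one_of_mem_of_one_mem (d.one_mem i) hg
  exact nw.ne_one _ hl (congrArg Subtype.val (hself.symm.trans hone))

end Monoid.PushoutI

section PingPong

open Monoid Monoid.PushoutI

variable {Γ : Type*} [Group Γ] {Z : Type*} [MulAction Γ Z]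
  {G : Bool → Subgroup Γ} {J : Subgroup Γ} {X D : Bool → Set Z}

theorem IsInteractivePair.eq_of_mem (hX : IsInteractivePair G J X) {a b : Bool} {x : Z}
    (ha : x ∈ X a) (hb : x ∈ X b) : a = b := by
  cases a <;> cases b
  · rfl
  · exact (Set.disjoint_left.mp hX.2.1 hb ha).elim
  · exact (Set.disjoint_left.mp hX.2.1 ha hb).elim
  · rfl

theorem IsInteractivePair.smul_mem (hX : IsInteractivePair G J X) {t : Bool} {a : Γ}
    (ha : NFLetter G J t a) {x : Z} (hx : x ∈ X t) : a • x ∈ X (!t) :=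
  hX.2.2.2 t a ha (Set.smul_mem_smul_set hx)

noncomputable def wordProd (G : Bool → Subgroup Γ) (u : CoprodI.Word fun i => G i) : Γ :=
  CoprodI.lift (fun i => (G i).subtype) u.prod

@[simp]
theorem wordProd_empty : wordProd G .empty = 1 :=
  map_one _

@[simp]
theorem wordProd_cons {i : Bool} (g : G i) (u : CoprodI.Word fun i => G i) (hu) (hg) :
    wordProd G (.cons g u hu hg) = g * wordProd G u := by
  simp [wordProd]

theorem nfLetter_smul_mem (hX : IsInteractivePair G J X)
    (hmap : ∀ m, ∀ g ∈ G m, g • (D m ∩ X (!m)) ⊆ X (!m))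
    {t : Bool} {a : Γ} (ha : NFLetter G J t a) {m : Bool} {x : Z} (hx : x ∈ D m ∩ X (!m)) :
    a • x ∈ X (!t) := by
  by_cases htm : t = m
  · subst htm
    exact hmap t a ha.1 (Set.smul_mem_smul_set hx)
  · have : (!m) = t := by cases t <;> cases m <;> simp_all
    exact hX.smul_mem ha (this ▸ hx.2)

theorem nfLetter_mul_wordProd_smul_mem (hX : IsInteractivePair G J X)
    (hmap : ∀ m, ∀ g ∈ G m, g • (D m ∩ X (!m)) ⊆ X (!m))
    {m : Bool} {x : Z} (hx : x ∈ D m ∩ X (!m)) (u : CoprodI.Word fun i => G i)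
    (hu : ∀ l ∈ u.toList, (l.2 : Γ) ∉ J) {t : Bool} {a : Γ} (ha : NFLetter G J t a)
    (hut : u.fstIdx ≠ some t) : (a * wordProd G u) • x ∈ X (!t) := by
  induction u using CoprodI.Word.consRecOn generalizing t a with
  | empty => simpa using nfLetter_smul_mem hX hmap ha hx
  | cons i g u hui _ ih =>
    have hit : (!i) = t := by
      cases i <;> cases t <;> simp_all
    have hgu : (g * wordProd G u) • x ∈ X (!i) :=
      ih (fun l hl => hu l (List.mem_cons_of_mem _ hl)) ⟨g.2, hu _ List.mem_cons_self⟩ hui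
    rw [wordProd_cons, mul_smul]
    exact hX.smul_mem ha (hit ▸ hgu)

theorem nfLetter_mul_wordProd_smul_notMem (hX : IsInteractivePair G J X)
    (hfund : ∀ m, ∀ x ∈ D m, ∀ g ∈ G m, g ≠ 1 → g • x ∉ D m)
    (hmap : ∀ m, ∀ g ∈ G m, g • (D m ∩ X (!m)) ⊆ X (!m))
    {m : Bool} {x : Z} (hx : x ∈ D m ∩ X (!m)) (u : CoprodI.Word fun i => G i)
    (hu : ∀ l ∈ u.toList, (l.2 : Γ) ∉ J) {t : Bool} {a : Γ} (ha : NFLetter G J t a)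
    (hut : u.fstIdx ≠ some t) (m' : Bool) : (a * wordProd G u) • x ∉ D m' ∩ X (!m') := by
  intro hy
  have hyt := nfLetter_mul_wordProd_smul_mem hX hmap hx u hu ha hut
  obtain rfl : m' = t := Bool.not_inj (hX.eq_of_mem hy.2 hyt)
  have hback : wordProd G u • x ∈ X (!m') := by
    simpa [mul_smul] using hmap m' a⁻¹ (inv_mem ha.1) (Set.smul_mem_smul_set hy)
  cases u using CoprodI.Word.consRecOn with
  | empty =>
    simp only [wordProd_empty, one_smul, mul_one] at hback hy
    obtain rfl : m = m' := Bool.not_inj (hX.eq_of_mem hx.2 hback)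
    exact hfund m x hx.1 a ha.1 (fun h => ha.2 (h ▸ J.one_mem)) hy.1
  | cons i g u hui _ =>
    have hi : i ≠ m' := by simpa using hut
    have hgu := nfLetter_mul_wordProd_smul_mem hX hmap hx u
      (fun l hl => hu l (List.mem_cons_of_mem _ hl)) ⟨g.2, hu _ List.mem_cons_self⟩ hui
    rw [wordProd_cons] at hback
    exact hi (Bool.not_inj (hX.eq_of_mem hgu hback))

theorem smul_notMem_of_mem_of_ne_one (hX : IsInteractivePair G J X) (hJ : ∀ m, J ≤ G m)
    (hfund : ∀ m, ∀ x ∈ D m, ∀ g ∈ G m, g ≠ 1 → g • x ∉ D m)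
    (hmap : ∀ m, ∀ g ∈ G m, g • (D m ∩ X (!m)) ⊆ X (!m))
    {m : Bool} {x : Z} (hx : x ∈ D m ∩ X (!m)) {h : Γ} (hJh : h ∈ J) (h1 : h ≠ 1)
    (m' : Bool) : h • x ∉ D m' ∩ X (!m') := by
  intro hy
  have hhx := hmap m h (hJ m hJh) (Set.smul_mem_smul_set hx)
  obtain rfl : m' = m := Bool.not_inj (hX.eq_of_mem hy.2 hhx)
  exact hfund m' x hx.1 h (hJ m' hJh) h1 hy.1

theorem amalgHom_ofCoprodI (hJ : ∀ m, J ≤ G m) (p : CoprodI fun i => G i) :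
    amalgHom G J hJ (ofCoprodI p) = CoprodI.lift (fun i => (G i).subtype) p :=
  DFunLike.congr_fun (CoprodI.ext_hom ((amalgHom G J hJ).comp ofCoprodI)
    (CoprodI.lift fun i => (G i).subtype) fun i => by ext g; simp [amalgHom]) p

theorem exists_amalgHom_eq_mul_wordProd (hJ : ∀ m, J ≤ G m)
    (w : PushoutI fun m => Subgroup.inclusion (hJ m)) :
    ∃ (h : J) (u : CoprodI.Word fun i => G i), (∀ l ∈ u.toList, (l.2 : Γ) ∉ J) ∧
      w = base _ h * ofCoprodI u.prod ∧ amalgHom G J hJ w = h * wordProd G u := by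
  obtain ⟨h, u, hu, rfl⟩ :=
    exists_reduced_eq_base_mul (fun m => Subgroup.inclusion_injective (hJ m)) w
  refine ⟨h, u, fun l hl hlJ => hu l hl ⟨⟨l.2, hlJ⟩, rfl⟩, rfl, ?_⟩
  rw [map_mul, amalgHom_ofCoprodI]
  simp [amalgHom, wordProd]

theorem NFLetter.mul_left (hJ : ∀ m, J ≤ G m) {t : Bool} {a j : Γ} (ha : NFLetter G J t a)
    (hj : j ∈ J) : NFLetter G J t (j * a) :=
  ⟨mul_mem (hJ t hj) ha.1, fun hja => ha.2 (by simpa using mul_mem (inv_mem hj) hja)⟩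

theorem disjoint_amalgHom_smul (hX : IsInteractivePair G J X) (hJ : ∀ m, J ≤ G m)
    (hfund : ∀ m, ∀ x ∈ D m, ∀ g ∈ G m, g ≠ 1 → g • x ∉ D m)
    (hmap : ∀ m, ∀ g ∈ G m, g • (D m ∩ X (!m)) ⊆ X (!m))
    {w : PushoutI fun m => Subgroup.inclusion (hJ m)} (hw : w ≠ 1) :
    Disjoint (amalgHom G J hJ w • ⋃ m, D m ∩ X (!m)) (⋃ m, D m ∩ X (!m)) := by
  obtain ⟨h, u, hu, hwu, hγ⟩ := exists_amalgHom_eq_mul_wordProd hJ w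
  rw [Set.disjoint_left]
  rintro _ ⟨x, hx, rfl⟩ hy
  obtain ⟨m, hx⟩ := Set.mem_iUnion.mp hx
  obtain ⟨m', hy⟩ := Set.mem_iUnion.mp hy
  rw [hγ] at hy
  cases u using CoprodI.Word.consRecOn with
  | empty =>
    have h1 : (h : Γ) ≠ 1 := fun h1 => hw (by simp [hwu, (Subtype.ext h1 : h = 1)])
    rw [wordProd_empty, mul_one] at hy
    exact smul_notMem_of_mem_of_ne_one hX hJ hfund hmap hx h.2 h1 m' hy
  | cons i g u hui _ =>
    rw [wordProd_cons, ← mul_assoc] at hy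
    have hg : NFLetter G J i g := ⟨g.2, hu _ List.mem_cons_self⟩
    exact nfLetter_mul_wordProd_smul_notMem hX hfund hmap hx u
      (fun l hl => hu l (List.mem_cons_of_mem _ hl)) (hg.mul_left hJ h.2) hui m' hy

theorem sup_le_range_amalgHom (hJ : ∀ m, J ≤ G m) :
    G true ⊔ G false ≤ (amalgHom G J hJ).range :=
  sup_le_iff.mpr ⟨fun g hg => ⟨of true ⟨g, hg⟩, by simp [amalgHom]⟩,
    fun g hg => ⟨of false ⟨g, hg⟩, by simp [amalgHom]⟩⟩

end PingPong

theorem stmt4 {Γ : Type*} [Group Γ] {Z : Type*} [MulAction Γ Z]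
    (G : Bool → Subgroup Γ) (J : Subgroup Γ) (hJ : ∀ m, J ≤ G m)
    (X : Bool → Set Z) (hX : IsInteractivePair G J X)
    (D : Bool → Set Z)
    (hfund : ∀ m, ∀ x ∈ D m, ∀ g ∈ G m, g ≠ 1 → g • x ∉ D m)
    (hmap : ∀ m, ∀ g ∈ G m, g • (D m ∩ X (!m)) ⊆ X (!m)) :
    (∀ γ ∈ G true ⊔ G false, γ ≠ 1 →
        γ • ((D true ∩ X false) ∪ (D false ∩ X true)) ∩
          ((D true ∩ X false) ∪ (D false ∩ X true)) = ∅) ∧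
      (((D true ∩ X false) ∪ (D false ∩ X true)).Nonempty →
        Function.Injective (amalgHom G J hJ)) := by
  have hS : (D true ∩ X false) ∪ (D false ∩ X true) = ⋃ m, D m ∩ X (!m) := by
    ext x
    simp [or_comm]
  rw [hS]
  refine ⟨fun γ hγ hγ1 => ?_, fun hne => ?_⟩
  · obtain ⟨w, rfl⟩ := sup_le_range_amalgHom hJ hγ
    rw [← Set.disjoint_iff_inter_eq_empty]
    exact disjoint_amalgHom_smul hX hJ hfund hmap (fun hw => hγ1 (by simp [hw]))
  · refine (injective_iff_map_eq_one _).mpr fun w hw => ?_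
    by_contra hw1
    have := disjoint_amalgHom_smul hX hJ hfund hmap hw1
    rw [hw, one_smul, disjoint_self, Set.bot_eq_empty] at this
    exact hne.ne_empty this
end

section
/- Let Γ be a group acting on a set Z, G₁ and G₂ subgroups of Γ, and J a subgroup of G₁ ∩ G₂. Let B₁, B₂ ⊆ Z satisfy Z = B₁ ∪ B₂, set S = B₁ ∩ B₂ and X_m = Z ∖ B_{3−m}, and assume j • B_m = B_m for every j ∈ J and, for every g ∈ G_m∖J, both g • B_m ⊆ B_{3−m} and g • X_m ⊆ X_{3−m} (m ∈ {1,2}). Assume in addition that S is precisely invariant under J in G₁ and in G₂, i.e. g • S ∩ S = ∅ for every g ∈ G₁∖J and every g ∈ G₂∖J. Then S is precisely invariant under J in the subgroup ⟨G₁, G₂⟩ generated by G₁ and G₂: j • S = S for every j ∈ J, and γ • S ∩ S = ∅ for every γ ∈ ⟨G₁, G₂⟩ ∖ J. -/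
/-!
Every element of `G true ⊔ G false` outside `J` is a reduced alternating product of letters
`x ∈ G m \ J`: multiplying a reduced word on the left by an element of some `G c` either adds a
letter or merges with the leftmost one, and factors from `J` are absorbed by the letters.
Ping-pong, with `X m = (B !m)ᶜ`, shows that a reduced word with leftmost letter in `G m` maps
`S = B m ∩ B !m` into `B !m \ B m`, which misses `S`. For a single letter `x` this is where the
precise invariance of `S` in the factors enters: `x • S ⊆ B !m`, so a point of `x • S` in `B m`
would lie in `x • S ∩ S = ∅`.
-/

open Pointwise

section

variable {Γ : Type*} [Group Γ] {G : Bool → Subgroup Γ} {J : Subgroup Γ}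

inductive AltWord (G : Bool → Subgroup Γ) (J : Subgroup Γ) : Bool → Γ → Prop
  | letter {m : Bool} {x : Γ} : NFLetter G J m x → AltWord G J m x
  | cons {m : Bool} {x w : Γ} : NFLetter G J (!m) x → AltWord G J m w → AltWord G J (!m) (x * w)

/-- Elements of `J` count as the empty word. -/
def HasReducedForm (G : Bool → Subgroup Γ) (J : Subgroup Γ) (w : Γ) : Prop :=
  w ∈ J ∨ ∃ m, AltWord G J m w

lemma NFLetter.mul_left_of_mem {m : Bool} {x j : Γ} (hJ : J ≤ G m) (hx : NFLetter G J m x)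
    (hj : j ∈ J) : NFLetter G J m (j * x) :=
  ⟨mul_mem (hJ hj) hx.1, fun hjx => hx.2 <| by simpa using mul_mem (inv_mem hj) hjx⟩

lemma AltWord.mul_left_of_mem (hJ : ∀ m, J ≤ G m) {m : Bool} {w j : Γ} (hw : AltWord G J m w)
    (hj : j ∈ J) : AltWord G J m (j * w) := by
  cases hw with
  | letter hx => exact .letter (hx.mul_left_of_mem (hJ _) hj)
  | cons hx hw => rw [← mul_assoc]; exact .cons (hx.mul_left_of_mem (hJ _) hj) hw

lemma hasReducedForm_of_mem {m : Bool} {x : Γ} (hx : x ∈ G m) : HasReducedForm G J x :=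
  (em (x ∈ J)).imp_right fun hxJ => ⟨m, .letter ⟨hx, hxJ⟩⟩

lemma AltWord.hasReducedForm_mul_left (hJ : ∀ m, J ≤ G m) {c m : Bool} {x w : Γ}
    (hx : x ∈ G c) (hw : AltWord G J m w) : HasReducedForm G J (x * w) := by
  by_cases hxJ : x ∈ J
  · exact .inr ⟨m, hw.mul_left_of_mem hJ hxJ⟩
  cases hw with
  | @letter m y hy =>
    obtain rfl | rfl := Bool.eq_or_eq_not c m
    · exact hasReducedForm_of_mem (mul_mem hx hy.1)
    · exact .inr ⟨!m, .cons ⟨hx, hxJ⟩ (.letter hy)⟩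
  | @cons m y w hy hw =>
    obtain rfl | rfl := Bool.eq_or_eq_not c (!m)
    · rw [← mul_assoc]
      by_cases hxy : x * y ∈ J
      · exact .inr ⟨m, hw.mul_left_of_mem hJ hxy⟩
      · exact .inr ⟨!m, .cons ⟨mul_mem hx hy.1, hxy⟩ hw⟩
    · exact .inr ⟨!!m, .cons ⟨hx, hxJ⟩ (.cons hy hw)⟩

lemma HasReducedForm.mul_left (hJ : ∀ m, J ≤ G m) {c : Bool} {x w : Γ} (hx : x ∈ G c)
    (hw : HasReducedForm G J w) : HasReducedForm G J (x * w) := by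
  rcases hw with hw | ⟨m, hw⟩
  · exact hasReducedForm_of_mem (mul_mem hx (hJ c hw))
  · exact hw.hasReducedForm_mul_left hJ hx

lemma hasReducedForm_of_mem_sup (hJ : ∀ m, J ≤ G m) {γ : Γ} (hγ : γ ∈ G true ⊔ G false) :
    HasReducedForm G J γ := by
  rw [Subgroup.sup_eq_closure] at hγ
  induction hγ using Subgroup.closure_induction_left with
  | one => exact .inl J.one_mem
  | mul_left x hx y _ ih => rcases hx with hx | hx <;> exact ih.mul_left hJ hx
  | inv_mul_cancel x hx y _ ih => rcases hx with hx | hx <;> exact ih.mul_left hJ (inv_mem hx)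

variable {Z : Type*} [MulAction Γ Z]

lemma inter_not_eq_inter (B : Bool → Set Z) (m : Bool) : B m ∩ B (!m) = B true ∩ B false := by
  cases m
  · exact Set.inter_comm _ _
  · rfl

theorem AltWord.smul_inter_subset {B : Bool → Set Z}
    (hmapB : ∀ m g, NFLetter G J m g → g • B m ⊆ B (!m))
    (hmapX : ∀ m g, NFLetter G J m g → g • (B (!m))ᶜ ⊆ (B m)ᶜ)
    (hprec : ∀ m g, NFLetter G J m g → Disjoint (g • (B true ∩ B false)) (B true ∩ B false))
    {m : Bool} {w : Γ} (hw : AltWord G J m w) :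
    w • (B true ∩ B false) ⊆ B (!m) ∩ (B m)ᶜ := by
  induction hw with
  | @letter m x hx =>
    have hB : x • (B true ∩ B false) ⊆ B (!m) := by
      rw [← inter_not_eq_inter B m]
      exact (Set.smul_set_mono Set.inter_subset_left).trans (hmapB m x hx)
    refine Set.subset_inter hB fun z hz hzm => Set.disjoint_left.1 (hprec m x hx) hz ?_
    rw [← inter_not_eq_inter B m]
    exact ⟨hzm, hB hz⟩
  | @cons m x w hx _ ih =>
    rw [mul_smul]
    refine (Set.smul_set_mono ih).trans ?_
    rw [Set.smul_set_inter]
    simpa using Set.inter_subset_inter (hmapB _ x hx) (hmapX _ x hx)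

end

theorem stmt9_general {Γ : Type*} [Group Γ] {Z : Type*} [MulAction Γ Z]
    (G : Bool → Subgroup Γ) (J : Subgroup Γ) (hJ : ∀ m, J ≤ G m)
    (B : Bool → Set Z)
    (S : Set Z) (hS : S = B true ∩ B false)
    (X : Bool → Set Z) (hX : ∀ m, X m = (B (!m))ᶜ)
    (hinv : ∀ m, ∀ j ∈ J, j • B m = B m)
    (hmapB : ∀ m, ∀ g : Γ, NFLetter G J m g → g • B m ⊆ B (!m))
    (hmapX : ∀ m, ∀ g : Γ, NFLetter G J m g → g • X m ⊆ X (!m))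
    (hprec : ∀ m, ∀ g : Γ, NFLetter G J m g → (g • S) ∩ S = ∅) :
    (∀ j ∈ J, j • S = S) ∧
      ∀ γ ∈ G true ⊔ G false, γ ∉ J → (γ • S) ∩ S = ∅ := by
  subst hS
  simp only [hX, Bool.not_not] at hmapX
  simp only [← Set.disjoint_iff_inter_eq_empty] at hprec ⊢
  refine ⟨fun j hj => by rw [Set.smul_set_inter, hinv true j hj, hinv false j hj], ?_⟩
  intro γ hγ hγJ
  obtain ⟨m, hw⟩ := (hasReducedForm_of_mem_sup hJ hγ).resolve_left hγJ
  have hSB : B true ∩ B false ⊆ B m := inter_not_eq_inter B m ▸ Set.inter_subset_left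
  exact Set.disjoint_of_subset ((hw.smul_inter_subset hmapB hmapX hprec).trans
    Set.inter_subset_right) hSB disjoint_compl_left

theorem stmt9 {Γ : Type*} [Group Γ] {Z : Type*} [MulAction Γ Z]
    (G : Bool → Subgroup Γ) (J : Subgroup Γ) (hJ : ∀ m, J ≤ G m)
    (B : Bool → Set Z) (hcover : B true ∪ B false = Set.univ)
    (S : Set Z) (hS : S = B true ∩ B false)
    (X : Bool → Set Z) (hX : ∀ m, X m = (B (!m))ᶜ)
    (hinv : ∀ m, ∀ j ∈ J, j • B m = B m)
    (hmapB : ∀ m, ∀ g : Γ, NFLetter G J m g → g • B m ⊆ B (!m))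
    (hmapX : ∀ m, ∀ g : Γ, NFLetter G J m g → g • X m ⊆ X (!m))
    (hprec : ∀ m, ∀ g : Γ, NFLetter G J m g → (g • S) ∩ S = ∅) :
    (∀ j ∈ J, j • S = S) ∧
      ∀ γ ∈ G true ⊔ G false, γ ∉ J → (γ • S) ∩ S = ∅ :=
  stmt9_general G J hJ B S hS X hX hinv hmapB hmapX hprec
end
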